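/- Uhlmann's theorem: for density operators ρ^A and σ^A and any fixed purification |φ⟩ on A⊗B of σ^A, the fidelity satisfies F(ρ,σ) = max over purifications |ψ⟩ on A⊗B of ρ^A of |⟨ψ|φ⟩|², provided dim B ≥ dim A. -/

import Mathlib

open scoped Matrix Kronecker ComplexOrder

noncomputable section

/-- The old `Matrix.PosSemidef.sqrt` (removed from Mathlib), with its old definition. -/
noncomputable def posSemidefSqrt {n : Type*} [Fintype n] [DecidableEq n] {A : Matrix n n ℂ}
    (hA : A.PosSemidef) : Matrix n n ℂ :=
  (hA.1.eigenvectorUnitary : Matrix n n ℂ) * Matrix.diagonal ((↑) ∘ Real.sqrt ∘ hA.1.eigenvalues) *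
    (star (hA.1.eigenvectorUnitary : Matrix n n ℂ))

noncomputable def traceNorm {n : Type*} [Fintype n] [DecidableEq n] (A : Matrix n n ℂ) : ℝ :=
  ((posSemidefSqrt (Matrix.posSemidef_conjTranspose_mul_self A)).trace).re

noncomputable def vnEntropy {n : Type*} [Fintype n] [DecidableEq n] (ρ : Matrix n n ℂ) : ℝ :=
  if h : ρ.IsHermitian then -∑ i, (h.eigenvalues i * Real.log (h.eigenvalues i)) else 0

def ptraceL {a b : Type*} [Fintype a] (M : Matrix (a × b) (a × b) ℂ) : Matrix b b ℂ :=
  Matrix.of fun i j => ∑ k : a, M (k, i) (k, j)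

def ptraceR {a b : Type*} [Fintype b] (M : Matrix (a × b) (a × b) ℂ) : Matrix a a ℂ :=
  Matrix.of fun i j => ∑ k : b, M (i, k) (j, k)

def ptrace3M {a b c : Type*} [Fintype b] (M : Matrix (a × b × c) (a × b × c) ℂ) :
    Matrix (a × c) (a × c) ℂ :=
  Matrix.of fun i j => ∑ k : b, M (i.1, k, i.2) (j.1, k, j.2)

open scoped Classical in
noncomputable def msqrt {n : Type*} [Fintype n] [DecidableEq n] (A : Matrix n n ℂ) :
    Matrix n n ℂ :=
  if h : A.PosSemidef then posSemidefSqrt h else 0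

noncomputable def fidelity {n : Type*} [Fintype n] [DecidableEq n] (ρ σ : Matrix n n ℂ) : ℝ :=
  (((msqrt (msqrt σ * ρ * msqrt σ)).trace).re) ^ 2

def outer {n : Type*} (v : n → ℂ) : Matrix n n ℂ :=
  Matrix.of fun i j => v i * (starRingEnd ℂ) (v j)

def krausApply {ι a b : Type*} [Fintype ι] [Fintype a]
    (K : ι → Matrix b a ℂ) (ρ : Matrix a a ℂ) : Matrix b b ℂ :=
  ∑ i, K i * ρ * (K i)ᴴ

/-!
View a vector on `A ⊗ B` as an `A × B` coefficient matrix `Ψ`; its reduced state is `Ψ Ψᴴ` and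
`⟨ψ|φ⟩ = tr (Ψᴴ Φ)`. Because `dim B ≥ dim A`, every `Ψ` factors as `√(Ψ Ψᴴ) V` with `V Vᴴ = 1`
(normalize the orthogonal rows of `Ψ` in an eigenbasis of `Ψ Ψᴴ` and complete them to an
orthonormal family). So the purifications of `ρ` are the `√ρ V`, and with `Φ = √σ W`
the overlaps are `tr (Vᴴ M W)` for `M = √ρ √σ`. By the polar decomposition `M = U |M|` and
Cauchy–Schwarz, `|tr (Vᴴ M W)| ≤ tr |M|`, with equality for `V = U W`; and `(tr |M|)² = F(ρ, σ)`.
-/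

open Matrix Module
open scoped InnerProductSpace

section Orthonormal

variable {𝕜 E : Type*} [RCLike 𝕜] [NormedAddCommGroup E] [InnerProductSpace 𝕜 E]
  [FiniteDimensional 𝕜 E]

theorem Orthonormal.exists_orthonormal_extension_of_card_le {ι : Type*} [Fintype ι]
    (hcard : Fintype.card ι ≤ finrank 𝕜 E) {v : ι → E} {s : Set ι}
    (hv : Orthonormal 𝕜 (s.domRestrict v)) :
    ∃ w : ι → E, Orthonormal 𝕜 w ∧ ∀ i ∈ s, w i = v i := by
  classical
  have hcard' : finrank 𝕜 E = Fintype.card (ι ⊕ Fin (finrank 𝕜 E - Fintype.card ι)) := by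
    simp only [Fintype.card_sum, Fintype.card_fin]; omega
  have hv' : Orthonormal 𝕜 ((Sum.inl '' s).domRestrict
      (Sum.elim v (0 : Fin (finrank 𝕜 E - Fintype.card ι) → E))) := by
    rw [orthonormal_iff_ite] at hv ⊢
    rintro ⟨_, i, hi, rfl⟩ ⟨_, j, hj, rfl⟩
    simpa [Subtype.ext_iff] using hv ⟨i, hi⟩ ⟨j, hj⟩
  obtain ⟨b, hb⟩ := hv'.exists_orthonormalBasis_extension_of_card_eq hcard'
  exact ⟨b ∘ Sum.inl, b.orthonormal.comp _ Sum.inl_injective,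
    fun i hi => hb _ (Set.mem_image_of_mem _ hi)⟩

theorem exists_orthonormal_smul_eq_of_pairwise_inner_eq_zero {ι : Type*} [Fintype ι]
    (hcard : Fintype.card ι ≤ finrank 𝕜 E) {g : ι → E}
    (hg : Pairwise fun i j => ⟪g i, g j⟫_𝕜 = 0) :
    ∃ x : ι → E, Orthonormal 𝕜 x ∧ ∀ i, (‖g i‖ : 𝕜) • x i = g i := by
  set v : ι → E := fun i => (‖g i‖⁻¹ : 𝕜) • g i
  have hv : Orthonormal 𝕜 ({i | g i ≠ 0}.domRestrict v) := by
    refine ⟨fun i => norm_smul_inv_norm i.2, fun i j hij => ?_⟩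
    simp only [Set.domRestrict, v, inner_smul_left, inner_smul_right,
      hg (Subtype.coe_ne_coe.mpr hij), mul_zero]
  obtain ⟨x, hx, hxv⟩ := hv.exists_orthonormal_extension_of_card_le hcard
  refine ⟨x, hx, fun i => ?_⟩
  by_cases hi : g i = 0
  · simp [hi]
  · rw [hxv i hi, smul_smul, mul_inv_cancel₀ (by simpa using hi), one_smul]

end Orthonormal

section Sqrt

variable {n : Type*} [Fintype n] [DecidableEq n] {A : Matrix n n ℂ}

lemma msqrt_of_posSemidef (hA : A.PosSemidef) : msqrt A = posSemidefSqrt hA := by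
  rw [msqrt, dif_pos hA]

lemma posSemidef_posSemidefSqrt (hA : A.PosSemidef) : (posSemidefSqrt hA).PosSemidef := by
  have hD : (diagonal ((↑) ∘ Real.sqrt ∘ hA.1.eigenvalues : n → ℂ)).PosSemidef :=
    posSemidef_diagonal_iff.mpr fun i => Complex.zero_le_real.mpr (Real.sqrt_nonneg _)
  simpa [posSemidefSqrt, star_eq_conjTranspose] using
    hD.mul_mul_conjTranspose_same (hA.1.eigenvectorUnitary : Matrix n n ℂ)

lemma posSemidefSqrt_mul_self (hA : A.PosSemidef) :
    posSemidefSqrt hA * posSemidefSqrt hA = A := by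
  set U : Matrix n n ℂ := (hA.1.eigenvectorUnitary : Matrix n n ℂ)
  have hU : star U * U = 1 := Unitary.coe_star_mul_self hA.1.eigenvectorUnitary
  have hDD : diagonal ((↑) ∘ Real.sqrt ∘ hA.1.eigenvalues : n → ℂ) *
      diagonal ((↑) ∘ Real.sqrt ∘ hA.1.eigenvalues) = diagonal ((↑) ∘ hA.1.eigenvalues) := by
    rw [diagonal_mul_diagonal]
    congr 1
    funext i
    simp only [Function.comp_apply, ← Complex.ofReal_mul,
      Real.mul_self_sqrt (hA.eigenvalues_nonneg i)]
  calc posSemidefSqrt hA * posSemidefSqrt hA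
      = U * (diagonal ((↑) ∘ Real.sqrt ∘ hA.1.eigenvalues) * (star U * U) *
          diagonal ((↑) ∘ Real.sqrt ∘ hA.1.eigenvalues)) * star U := by
        simp only [posSemidefSqrt, U, Matrix.mul_assoc]
    _ = A := by
        rw [hU, Matrix.mul_one, hDD]
        exact hA.1.spectral_theorem.symm

lemma isHermitian_msqrt (A : Matrix n n ℂ) : (msqrt A).IsHermitian := by
  by_cases hA : A.PosSemidef
  · rw [msqrt_of_posSemidef hA]; exact (posSemidef_posSemidefSqrt hA).1
  · rw [msqrt, dif_neg hA]; exact isHermitian_zero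

lemma posSemidef_msqrt (hA : A.PosSemidef) : (msqrt A).PosSemidef := by
  rw [msqrt_of_posSemidef hA]; exact posSemidef_posSemidefSqrt hA

lemma msqrt_mul_self (hA : A.PosSemidef) : msqrt A * msqrt A = A := by
  rw [msqrt_of_posSemidef hA]; exact posSemidefSqrt_mul_self hA

end Sqrt

lemma mul_conjTranspose_apply_eq_inner {𝕜 m n : Type*} [RCLike 𝕜] [Fintype n]
    (A B : Matrix m n 𝕜) (i j : m) :
    (A * Bᴴ) i j = ⟪WithLp.toLp 2 (B j), WithLp.toLp 2 (A i)⟫_𝕜 := by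
  simp [mul_apply, EuclideanSpace.inner_toLp_toLp, dotProduct]

lemma mul_conjTranspose_self_eq_one_iff {𝕜 m n : Type*} [RCLike 𝕜] [Fintype n] [DecidableEq m]
    (A : Matrix m n 𝕜) : A * Aᴴ = 1 ↔ Orthonormal 𝕜 fun i => WithLp.toLp 2 (A i) := by
  rw [orthonormal_iff_ite, ← Matrix.ext_iff]
  simp only [mul_conjTranspose_apply_eq_inner, one_apply]
  exact ⟨fun h i j => by simpa [eq_comm] using h j i,
    fun h i j => by simpa [eq_comm] using h j i⟩

section Coisometry

variable {m n : Type*} [Fintype m] [DecidableEq m] [Fintype n]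

lemma exists_coisometry_diagonal_sqrt_mul_eq (hcard : Fintype.card m ≤ Fintype.card n)
    {G : Matrix m n ℂ} {d : m → ℝ} (hG : G * Gᴴ = diagonal ((↑) ∘ d)) :
    ∃ X : Matrix m n ℂ, X * Xᴴ = 1 ∧ diagonal (((↑) : ℝ → ℂ) ∘ Real.sqrt ∘ d) * X = G := by
  set g : m → EuclideanSpace ℂ n := fun i => WithLp.toLp 2 (G i)
  have hinner (i j : m) : ⟪g i, g j⟫_ℂ = diagonal ((↑) ∘ d : m → ℂ) j i := by
    rw [← hG, mul_conjTranspose_apply_eq_inner]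
  have hnorm (i : m) : ‖g i‖ = Real.sqrt (d i) := by
    rw [← Real.sqrt_sq (norm_nonneg _), norm_sq_eq_re_inner (𝕜 := ℂ), hinner]
    simp
  obtain ⟨x, hx, hgx⟩ := exists_orthonormal_smul_eq_of_pairwise_inner_eq_zero (𝕜 := ℂ)
    (by simpa using hcard) (g := g) fun i j hij => by
      change ⟪g i, g j⟫_ℂ = 0
      rw [hinner, diagonal_apply_ne _ hij.symm]
  refine ⟨Matrix.of fun i => WithLp.ofLp (x i), (mul_conjTranspose_self_eq_one_iff _).2 hx, ?_⟩
  ext i k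
  rw [Matrix.diagonal_mul, Function.comp_apply, Function.comp_apply, ← hnorm]
  exact congrArg (· k) (hgx i)

lemma exists_coisometry_msqrt_mul_eq (hcard : Fintype.card m ≤ Fintype.card n)
    (Φ : Matrix m n ℂ) : ∃ W : Matrix m n ℂ, W * Wᴴ = 1 ∧ msqrt (Φ * Φᴴ) * W = Φ := by
  have hP : (Φ * Φᴴ).PosSemidef := posSemidef_self_mul_conjTranspose Φ
  set V : Matrix m m ℂ := (hP.1.eigenvectorUnitary : Matrix m m ℂ)
  have hVV : V * star V = 1 := Unitary.coe_mul_star_self _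
  have hVV' : star V * V = 1 := Unitary.coe_star_mul_self _
  have hG : (star V * Φ) * (star V * Φ)ᴴ = diagonal ((↑) ∘ hP.1.eigenvalues) := by
    have h := hP.1.conjStarAlgAut_star_eigenvectorUnitary
    rw [Unitary.conjStarAlgAut_star_apply] at h
    rw [conjTranspose_mul, ← star_eq_conjTranspose, star_star, Matrix.mul_assoc,
      ← Matrix.mul_assoc Φ, ← Matrix.mul_assoc]
    exact h
  obtain ⟨X, hX, hXG⟩ := exists_coisometry_diagonal_sqrt_mul_eq hcard hG
  refine ⟨V * X, ?_, ?_⟩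
  · rw [conjTranspose_mul, Matrix.mul_assoc, ← Matrix.mul_assoc X, hX, Matrix.one_mul,
      ← star_eq_conjTranspose, hVV]
  · rw [msqrt_of_posSemidef hP, posSemidefSqrt]
    change V * _ * star V * (V * X) = Φ
    simp only [Matrix.mul_assoc]
    rw [← Matrix.mul_assoc (star V) V, hVV', Matrix.one_mul, hXG, ← Matrix.mul_assoc, hVV,
      Matrix.one_mul]

end Coisometry

lemma norm_sum_conj_mul_sq_le {ι : Type*} [Fintype ι] (x y : ι → ℂ) :
    ‖∑ i, starRingEnd ℂ (x i) * y i‖ ^ 2 ≤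
      (∑ i, Complex.normSq (x i)) * ∑ i, Complex.normSq (y i) := by
  have hnorm (z : ι → ℂ) : ‖WithLp.toLp 2 z‖ ^ 2 = ∑ i, Complex.normSq (z i) := by
    simp [EuclideanSpace.norm_sq_eq, Complex.normSq_eq_norm_sq]
  have hinner : ⟪WithLp.toLp 2 x, WithLp.toLp 2 y⟫_ℂ = ∑ i, starRingEnd ℂ (x i) * y i := by
    simp [EuclideanSpace.inner_toLp_toLp, dotProduct, mul_comm]
  rw [← hnorm, ← hnorm, ← mul_pow, ← hinner]
  exact pow_le_pow_left₀ (norm_nonneg _) (norm_inner_le_norm _ _) 2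

section Bipartite

variable {a b : Type*} [Fintype a] [Fintype b]

def coeffMatrix (ψ : a × b → ℂ) : Matrix a b ℂ := Matrix.of (Function.curry ψ)

omit [Fintype a] [Fintype b] in
@[simp]
lemma coeffMatrix_uncurry (A : Matrix a b ℂ) : coeffMatrix (Function.uncurry A) = A := rfl

omit [Fintype a] in
lemma ptraceR_outer (ψ : a × b → ℂ) :
    ptraceR (outer ψ) = coeffMatrix ψ * (coeffMatrix ψ)ᴴ := by
  ext i j
  simp [ptraceR, outer, coeffMatrix, mul_apply]

lemma sum_conj_mul_eq_trace (ψ φ : a × b → ℂ) :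
    ∑ u, starRingEnd ℂ (ψ u) * φ u = ((coeffMatrix ψ)ᴴ * coeffMatrix φ).trace := by
  rw [trace, Fintype.sum_prod_type, Finset.sum_comm]
  simp [coeffMatrix, mul_apply]

lemma sum_normSq_eq_trace (ψ : a × b → ℂ) :
    ((∑ u, Complex.normSq (ψ u) : ℝ) : ℂ) = (coeffMatrix ψ * (coeffMatrix ψ)ᴴ).trace := by
  rw [trace, Fintype.sum_prod_type]
  push_cast
  simp [coeffMatrix, mul_apply, Complex.mul_conj]

lemma norm_trace_conjTranspose_mul_sq_le (A B : Matrix a b ℂ) :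
    ‖(Aᴴ * B).trace‖ ^ 2 ≤ (A * Aᴴ).trace.re * (B * Bᴴ).trace.re := by
  have hre (C : Matrix a b ℂ) :
      (C * Cᴴ).trace.re = ∑ u, Complex.normSq (Function.uncurry C u) := by
    rw [← coeffMatrix_uncurry C, ← sum_normSq_eq_trace, Complex.ofReal_re, coeffMatrix_uncurry]
  rw [hre, hre, ← coeffMatrix_uncurry A, ← coeffMatrix_uncurry B, ← sum_conj_mul_eq_trace]
  exact norm_sum_conj_mul_sq_le _ _

lemma sum_conj_mul_eq_trace_of_coeffMatrix_eq {ψ φ : a × b → ℂ} {P Q : Matrix a a ℂ}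
    {V W : Matrix a b ℂ} (hP : P.IsHermitian) (hψ : coeffMatrix ψ = P * V)
    (hφ : coeffMatrix φ = Q * W) :
    ∑ u, starRingEnd ℂ (ψ u) * φ u = (Vᴴ * (P * Q) * W).trace := by
  rw [sum_conj_mul_eq_trace, hψ, hφ, conjTranspose_mul, hP.eq]
  simp only [Matrix.mul_assoc]

end Bipartite

section TraceNorm

variable {m n : Type*} [Fintype m] [DecidableEq m] [Fintype n]

lemma exists_unitary_mul_msqrt_eq (M : Matrix m m ℂ) :
    ∃ U : Matrix m m ℂ, Uᴴ * U = 1 ∧ U * Uᴴ = 1 ∧ U * msqrt (Mᴴ * M) = M := by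
  obtain ⟨W, hW, hWM⟩ := exists_coisometry_msqrt_mul_eq le_rfl Mᴴ
  rw [conjTranspose_conjTranspose] at hWM
  refine ⟨Wᴴ, by rwa [conjTranspose_conjTranspose], ?_, ?_⟩
  · rw [conjTranspose_conjTranspose]; exact mul_eq_one_comm.mp hW
  · rw [← (isHermitian_msqrt _).eq, ← conjTranspose_mul, hWM, conjTranspose_conjTranspose]

lemma traceNorm_eq_re_trace_msqrt (M : Matrix m m ℂ) :
    traceNorm M = (msqrt (Mᴴ * M)).trace.re := by
  rw [traceNorm, msqrt_of_posSemidef]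

lemma norm_trace_conjTranspose_mul_mul_le_traceNorm (M : Matrix m m ℂ) {V W : Matrix m n ℂ}
    (hV : V * Vᴴ = 1) (hW : W * Wᴴ = 1) : ‖(Vᴴ * M * W).trace‖ ≤ traceNorm M := by
  obtain ⟨U, hUU, -, hUM⟩ := exists_unitary_mul_msqrt_eq M
  set T := msqrt (Mᴴ * M)
  have hT : T.PosSemidef := posSemidef_msqrt (posSemidef_conjTranspose_mul_self M)
  set S := msqrt T
  have hSS : S * S = T := msqrt_mul_self hT
  have hS : Sᴴ = S := (isHermitian_msqrt T).eq
  -- Cauchy–Schwarz applied to `S Uᴴ V` and `S W`, whose Gram matrices are both `T`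
  have hcs := norm_trace_conjTranspose_mul_sq_le (S * Uᴴ * V) (S * W)
  have hAB : (S * Uᴴ * V)ᴴ * (S * W) = Vᴴ * M * W := by
    simp only [conjTranspose_mul, conjTranspose_conjTranspose, hS, Matrix.mul_assoc]
    rw [← Matrix.mul_assoc S S, hSS, ← Matrix.mul_assoc U T, hUM]
  have hA : S * Uᴴ * V * (S * Uᴴ * V)ᴴ = T := by
    simp only [conjTranspose_mul, conjTranspose_conjTranspose, hS, Matrix.mul_assoc]
    rw [← Matrix.mul_assoc V, hV, Matrix.one_mul, ← Matrix.mul_assoc Uᴴ, hUU, Matrix.one_mul,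
      hSS]
  have hB : S * W * (S * W)ᴴ = T := by
    rw [conjTranspose_mul, hS, Matrix.mul_assoc, ← Matrix.mul_assoc W, hW, Matrix.one_mul, hSS]
  rw [hAB, hA, hB, ← sq] at hcs
  rw [traceNorm_eq_re_trace_msqrt]
  exact (pow_le_pow_iff_left₀ (norm_nonneg _) (Complex.nonneg_iff.mp hT.trace_nonneg).1
    two_ne_zero).mp hcs

lemma exists_trace_conjTranspose_mul_mul_eq_traceNorm (M : Matrix m m ℂ) {W : Matrix m n ℂ}
    (hW : W * Wᴴ = 1) : ∃ V : Matrix m n ℂ, V * Vᴴ = 1 ∧ (Vᴴ * M * W).trace = traceNorm M := by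
  obtain ⟨U, hUU, hUU', hUM⟩ := exists_unitary_mul_msqrt_eq M
  set T := msqrt (Mᴴ * M)
  have hT : T.PosSemidef := posSemidef_msqrt (posSemidef_conjTranspose_mul_self M)
  refine ⟨U * W, ?_, ?_⟩
  · rw [conjTranspose_mul, Matrix.mul_assoc, ← Matrix.mul_assoc W, hW, Matrix.one_mul, hUU']
  · have hVMW : (U * W)ᴴ * M * W = Wᴴ * T * W := by
      rw [← hUM, conjTranspose_mul, Matrix.mul_assoc Wᴴ, ← Matrix.mul_assoc Uᴴ, hUU,
        Matrix.one_mul]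
    rw [hVMW, Matrix.mul_assoc, trace_mul_comm, Matrix.mul_assoc, hW, Matrix.mul_one,
      traceNorm_eq_re_trace_msqrt]
    exact Complex.eq_re_of_ofReal_le (r := 0) (by simpa using hT.trace_nonneg)

end TraceNorm

lemma fidelity_eq_traceNorm_sq {n : Type*} [Fintype n] [DecidableEq n] {ρ : Matrix n n ℂ}
    (hρ : ρ.PosSemidef) (σ : Matrix n n ℂ) :
    fidelity ρ σ = traceNorm (msqrt ρ * msqrt σ) ^ 2 := by
  rw [fidelity, traceNorm_eq_re_trace_msqrt, conjTranspose_mul, (isHermitian_msqrt ρ).eq,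
    (isHermitian_msqrt σ).eq, Matrix.mul_assoc (msqrt σ) (msqrt ρ), ← Matrix.mul_assoc (msqrt ρ),
    msqrt_mul_self hρ, Matrix.mul_assoc]

theorem uhlmann_general {a b : Type*} [Fintype a] [DecidableEq a] [Fintype b]
    (ρ σ : Matrix a a ℂ) (hρ : ρ.PosSemidef) (hρ1 : ρ.trace = 1)
    (hdim : Fintype.card a ≤ Fintype.card b)
    (φ : a × b → ℂ) (hφpur : ptraceR (outer φ) = σ) :
    IsGreatest {r : ℝ | ∃ ψ : a × b → ℂ,
        (∑ u, Complex.normSq (ψ u)) = 1 ∧ ptraceR (outer ψ) = ρ ∧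
        r = (‖∑ u, (starRingEnd ℂ) (ψ u) * φ u‖)^2}
      (fidelity ρ σ) := by
  obtain ⟨W, hW, hWφ⟩ := exists_coisometry_msqrt_mul_eq hdim (coeffMatrix φ)
  rw [← ptraceR_outer, hφpur] at hWφ
  rw [fidelity_eq_traceNorm_sq hρ]
  constructor
  · obtain ⟨V, hV, hVtr⟩ :=
      exists_trace_conjTranspose_mul_mul_eq_traceNorm (msqrt ρ * msqrt σ) hW
    have hpur : msqrt ρ * V * (msqrt ρ * V)ᴴ = ρ := by
      rw [conjTranspose_mul, Matrix.mul_assoc, ← Matrix.mul_assoc V, hV, Matrix.one_mul,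
        (isHermitian_msqrt ρ).eq, msqrt_mul_self hρ]
    refine ⟨Function.uncurry (msqrt ρ * V), ?_, ?_, ?_⟩
    · have h := sum_normSq_eq_trace (Function.uncurry (msqrt ρ * V))
      rw [coeffMatrix_uncurry, hpur, hρ1] at h
      exact_mod_cast h
    · rw [ptraceR_outer, coeffMatrix_uncurry, hpur]
    · rw [sum_conj_mul_eq_trace_of_coeffMatrix_eq (isHermitian_msqrt ρ) (coeffMatrix_uncurry _)
        hWφ.symm, hVtr, Complex.norm_real, Real.norm_eq_abs, sq_abs]
  · rintro _ ⟨ψ, -, hψ, rfl⟩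
    obtain ⟨V, hV, hVψ⟩ := exists_coisometry_msqrt_mul_eq hdim (coeffMatrix ψ)
    rw [← ptraceR_outer, hψ] at hVψ
    rw [sum_conj_mul_eq_trace_of_coeffMatrix_eq (isHermitian_msqrt ρ) hVψ.symm hWφ.symm]
    gcongr
    exact norm_trace_conjTranspose_mul_mul_le_traceNorm _ hV hW

theorem uhlmann {a b : Type*} [Fintype a] [DecidableEq a] [Fintype b] [DecidableEq b]
    (ρ σ : Matrix a a ℂ) (hρ : ρ.PosSemidef) (hρ1 : ρ.trace = 1)
    (hσ : σ.PosSemidef) (hσ1 : σ.trace = 1)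
    (hdim : Fintype.card a ≤ Fintype.card b)
    (φ : a × b → ℂ) (hφ : ∑ u, Complex.normSq (φ u) = 1) (hφpur : ptraceR (outer φ) = σ) :
    IsGreatest {r : ℝ | ∃ ψ : a × b → ℂ,
        (∑ u, Complex.normSq (ψ u)) = 1 ∧ ptraceR (outer ψ) = ρ ∧
        r = (‖∑ u, (starRingEnd ℂ) (ψ u) * φ u‖)^2}
      (fidelity ρ σ) :=
  uhlmann_general ρ σ hρ hρ1 hdim φ hφpur
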